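/- Let λ be a binary partition of n ≥ 2 and define q_μ = P_1(μ)/z_μ for any binary partition μ (and, when λ has all parts even, write λ/2 for the binary partition (λ_1/2, λ_2/2, …); set q_{λ/2} = 0 if λ has a part equal to 1). Then 2·q_λ = q_{λ/2} + Σ_{(λ¹,λ²)} q_{λ¹}·q_{λ²}, where the sum runs over all ordered pairs (λ¹, λ²) of nonempty binary partitions whose multiset union is λ, each distinct ordered pair of partitions counted exactly once. -/

import Mathlib

/-! Write `P = P_1` and split the largest part `m` off `λ = m ∪ μ`; then
`P(λ) = (2|μ| - 1) P(μ)`. Let `T(λ) = Σ P(λ¹) P(λ²)` over the splittings of `λ` into two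
nonempty parts, each counted `z_λ / (z_{λ¹} z_{λ²})` times. The part `m` joins `λ¹` or `λ²`, the
splittings with an empty side contribute `P(μ)` each, and `(2|μ¹| - 1) + (2|μ²| - 1) = 2|μ| - 2`,
so `T(λ) = 2 P(μ) + (2|μ| - 2) T(μ)`. Induction on the number of parts now gives `2 P(λ) = T(λ)`
when `1` is a part of `λ`, and `2 P(2ν) = 2^{ℓ(ν)} P(ν) + T(2ν)` for every `ν`; dividing by `z_λ`,
where `z_{2ν} = 2^{ℓ(ν)} z_ν`, gives the recurrence. -/

/-- `z_λ = ∏_i i^{m_i} · m_i!` for a partition with `m_i` parts equal to `i`,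
presented as a multiset of parts. -/
def partZ (M : Multiset ℕ) : ℕ :=
  M.prod * (M.dedup.map fun i => (M.count i).factorial).prod

/-- `P_k(λ) = ∏_{i=2}^{ℓ} (2(λ_i + ⋯ + λ_ℓ) - 1)^k` for a partition
`λ_1 ≥ λ_2 ≥ ⋯ ≥ λ_ℓ`, presented as a multiset of parts: the tail sums of the
decreasing arrangement are the prefix sums of the increasing arrangement. -/
def partP (k : ℕ) (M : Multiset ℕ) : ℕ :=
  ∏ j ∈ Finset.range ((M.sort (· ≤ ·)).length - 1),
    (2 * ((M.sort (· ≤ ·)).take (j + 1)).sum - 1) ^ k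


/-- `q_μ = P_1(μ)/z_μ` for a partition presented as a multiset of parts. -/
def qfun (M : Multiset ℕ) : ℚ := (partP 1 M : ℚ) / (partZ M : ℚ)

open Multiset
open scoped Nat

namespace Multiset

section LinearOrder

variable {α : Type*} [LinearOrder α]

theorem induction_on_max {p : Multiset α → Prop} (s : Multiset α) (zero : p 0)
    (cons : ∀ a s, (∀ x ∈ s, x ≤ a) → p s → p (a ::ₘ s)) : p s := by
  suffices h : ∀ l : List α, l.Pairwise (· ≥ ·) → p l by
    simpa using h (s.sort (· ≥ ·)) (pairwise_sort _ _)
  intro l hl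
  induction l with
  | nil => exact zero
  | cons a l ih =>
    rw [List.pairwise_cons] at hl
    rw [← cons_coe]
    exact cons a l hl.1 (ih hl.2)

theorem sort_cons_of_forall_le {a : α} {s : Multiset α} (h : ∀ x ∈ s, x ≤ a) :
    (a ::ₘ s).sort (· ≤ ·) = s.sort (· ≤ ·) ++ [a] :=
  List.Perm.eq_of_pairwise' (pairwise_sort _ _)
    (List.pairwise_append.mpr ⟨pairwise_sort _ _, by simp,
      fun x hx y hy => List.mem_singleton.mp hy ▸ h x ((mem_sort _).mp hx)⟩)
    (coe_eq_coe.mp (by rw [← coe_add, sort_eq, coe_singleton, add_comm, singleton_add, sort_eq]))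

end LinearOrder

section DecidableEq

variable {α : Type*} [DecidableEq α]

theorem count_zero_self_antidiagonal (A : Multiset α) : (antidiagonal A).count (0, A) = 1 := by
  induction A using Multiset.induction_on with
  | empty => simp
  | cons a s ih =>
    have hinj : Function.Injective (Prod.map (id : Multiset α → _) (cons a)) :=
      Function.injective_id.prodMap fun _ _ => (cons_inj_right a).mp
    rw [antidiagonal_cons, Multiset.count_add,
      show ((0 : Multiset α), a ::ₘ s) = Prod.map id (cons a) (0, s) from rfl,
      count_map_eq_count' _ _ hinj, ih, count_eq_zero.mpr]
    simp

theorem count_self_zero_antidiagonal (A : Multiset α) : (antidiagonal A).count (A, 0) = 1 := by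
  rw [← map_swap_antidiagonal, ← count_zero_self_antidiagonal A]
  exact count_map_eq_count' _ _ Prod.swap_injective (0, A)

end DecidableEq

end Multiset

theorem partP_singleton (k a : ℕ) : partP k {a} = 1 := by simp [partP]

theorem partP_cons_of_forall_le (k : ℕ) {a : ℕ} {s : Multiset ℕ} (hs : s ≠ 0)
    (h : ∀ x ∈ s, x ≤ a) : partP k (a ::ₘ s) = (2 * s.sum - 1) ^ k * partP k s := by
  set l := s.sort (· ≤ ·)
  obtain ⟨n, hn⟩ : ∃ n, l.length = n + 1 :=
    Nat.exists_eq_add_one_of_ne_zero (by simpa [l] using hs)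
  have hsum : l.sum = s.sum := by rw [← sum_coe, sort_eq]
  have htake : ∀ j < n, (l ++ [a]).take (j + 1) = l.take (j + 1) :=
    fun j hj => List.take_append_of_le_length (by omega)
  rw [partP, partP, sort_cons_of_forall_le h, List.length_append, hn, List.length_singleton,
    Nat.add_sub_cancel, Nat.add_sub_cancel, Finset.prod_range_succ, mul_comm,
    List.take_append_of_le_length hn.ge, ← hn, List.take_length, hsum]
  congr 1
  exact Finset.prod_congr rfl fun j hj => by rw [htake j (by simpa [hn] using hj)]

theorem partZ_eq_prod_toFinset (M : Multiset ℕ) :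
    partZ M = M.prod * ∏ i ∈ M.toFinset, (M.count i)! := rfl

theorem partZ_zero : partZ 0 = 1 := rfl

theorem partZ_cons (a : ℕ) (s : Multiset ℕ) :
    partZ (a ::ₘ s) = a * (s.count a + 1) * partZ s := by
  set T := (a ::ₘ s).toFinset
  have ha : a ∈ T := by simp [T]
  have hs : ∏ i ∈ s.toFinset, (s.count i)! = ∏ i ∈ T, (s.count i)! :=
    Finset.prod_subset (fun i hi => by simp_all [T]) fun i _ hi => by
      rw [count_eq_zero.mpr (by simpa using hi), Nat.factorial_zero]
  have hrest : ∏ i ∈ T.erase a, ((a ::ₘ s).count i)! = ∏ i ∈ T.erase a, (s.count i)! :=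
    Finset.prod_congr rfl fun i hi => by rw [count_cons_of_ne (Finset.ne_of_mem_erase hi)]
  rw [partZ_eq_prod_toFinset, partZ_eq_prod_toFinset, hs, prod_cons,
    ← Finset.mul_prod_erase T _ ha, ← Finset.mul_prod_erase T _ ha, hrest, count_cons_self,
    Nat.factorial_succ]
  ring

theorem partZ_pos {M : Multiset ℕ} (h : ∀ x ∈ M, 0 < x) : 0 < partZ M :=
  Nat.mul_pos (CanonicallyOrderedAdd.multiset_prod_pos.mpr h)
    (CanonicallyOrderedAdd.multiset_prod_pos.mpr (by simp [Nat.factorial_pos]))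

theorem partZ_map_mul {c : ℕ} (hc : c ≠ 0) (N : Multiset ℕ) :
    partZ (N.map (c * ·)) = c ^ card N * partZ N := by
  induction N using Multiset.induction_on with
  | empty => rfl
  | cons a s ih =>
    rw [map_cons, partZ_cons, partZ_cons, ih, count_map_eq_count' _ _ (mul_right_injective₀ hc),
      card_cons]
    ring

theorem partZ_mul_partZ_mul_count_antidiagonal {M A B : Multiset ℕ} (h : A + B = M) :
    partZ A * partZ B * (antidiagonal M).count (A, B) = partZ M := by
  induction M using Multiset.induction_on generalizing A B with
  | empty =>
    obtain ⟨rfl, rfl⟩ := add_eq_zero.mp h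
    simp [partZ_zero]
  | cons a s ih =>
    have hright : ∀ {X Y : Multiset ℕ}, X + Y = a ::ₘ s →
        partZ X * partZ Y * ((antidiagonal s).map (Prod.map id (cons a))).count (X, Y) =
          a * Y.count a * partZ s := by
      intro X Y hXY
      by_cases hY : a ∈ Y
      · obtain ⟨Y, rfl⟩ := exists_cons_of_mem hY
        have hinj : Function.Injective (Prod.map (id : Multiset ℕ → _) (cons a)) :=
          Function.injective_id.prodMap fun _ _ => (cons_inj_right a).mp
        rw [show (X, a ::ₘ Y) = Prod.map id (cons a) (X, Y) from rfl,
          count_map_eq_count' _ _ hinj, partZ_cons, count_cons_self,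
          ← ih ((cons_inj_right a).mp (by rwa [← add_cons]))]
        ring
      · rw [count_eq_zero_of_notMem hY, count_eq_zero.mpr]
        · simp
        · simp only [mem_map, not_exists, not_and]
          rintro ⟨p₁, p₂⟩ - hp
          simp only [Prod.map_apply, Prod.mk.injEq] at hp
          exact hY (hp.2 ▸ mem_cons_self a p₂)
    have hswap : ((antidiagonal s).map (Prod.map (cons a) id)).count (A, B) =
        ((antidiagonal s).map (Prod.map id (cons a))).count (B, A) := by
      calc _ = (((antidiagonal s).map (Prod.map (cons a) id)).map Prod.swap).count (B, A) :=
            (count_map_eq_count' _ _ Prod.swap_injective _).symm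
        _ = (((antidiagonal s).map Prod.swap).map (Prod.map id (cons a))).count (B, A) := by
            rw [map_map, map_map]; rfl
        _ = _ := by rw [map_swap_antidiagonal]
    have hcount : A.count a + B.count a = s.count a + 1 := by
      rw [← Multiset.count_add, h, count_cons_self]
    rw [antidiagonal_cons, Multiset.count_add, mul_add, hright h, hswap, mul_comm (partZ A),
      hright (by rwa [add_comm]), partZ_cons, ← hcount]
    ring

theorem sum_pos_of_ne_zero {s : Multiset ℕ} (hs : s ≠ 0) (h : ∀ x ∈ s, 0 < x) : 0 < s.sum :=
  have ⟨x, hx⟩ := exists_mem_of_ne_zero hs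
  (h x hx).trans_le (le_sum_of_mem hx)

def splitTerm (p : Multiset ℕ × Multiset ℕ) : ℕ :=
  if p.1 ≠ 0 ∧ p.2 ≠ 0 then partP 1 p.1 * partP 1 p.2 else 0

/-- Summing over the multiset `antidiagonal M` counts a splitting `(A, B)` with multiplicity
`z_M / (z_A z_B)`. -/
def splitSum (M : Multiset ℕ) : ℕ := ((antidiagonal M).map splitTerm).sum

theorem splitSum_singleton (a : ℕ) : splitSum {a} = 0 := by
  simp [splitSum, splitTerm, ← cons_zero, antidiagonal_cons]

theorem splitTerm_cons_add_splitTerm_cons {a : ℕ} {s : Multiset ℕ} (hs : s ≠ 0)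
    (hpos : ∀ x ∈ s, 0 < x) (h : ∀ x ∈ s, x ≤ a) {p : Multiset ℕ × Multiset ℕ}
    (hp : p ∈ antidiagonal s) :
    splitTerm (p.1, a ::ₘ p.2) + splitTerm (a ::ₘ p.1, p.2) =
      ((if p.1 = 0 then partP 1 s else 0) + (if p.2 = 0 then partP 1 s else 0)) +
        (2 * s.sum - 2) * splitTerm p := by
  obtain ⟨X, Y⟩ := p
  rw [mem_antidiagonal] at hp
  by_cases hX : X = 0
  · subst hX
    rw [zero_add] at hp
    subst hp
    simp [splitTerm, hs, partP_singleton]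
  by_cases hY : Y = 0
  · subst hY
    rw [add_zero] at hp
    subst hp
    simp [splitTerm, hs, partP_singleton]
  have hX1 : 0 < X.sum := sum_pos_of_ne_zero hX fun x hx => hpos x (hp ▸ mem_add.mpr (.inl hx))
  have hY1 : 0 < Y.sum := sum_pos_of_ne_zero hY fun x hx => hpos x (hp ▸ mem_add.mpr (.inr hx))
  have hsum : X.sum + Y.sum = s.sum := by rw [← sum_add, hp]
  simp only [splitTerm, ne_eq, cons_ne_zero, not_false_eq_true, hX, hY, and_self, if_true,
    if_false, add_zero]
  rw [partP_cons_of_forall_le 1 hX fun x hx => h x (hp ▸ mem_add.mpr (.inl hx)),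
    partP_cons_of_forall_le 1 hY fun x hx => h x (hp ▸ mem_add.mpr (.inr hx))]
  have hfactor : (2 * Y.sum - 1) + (2 * X.sum - 1) = 2 * s.sum - 2 := by omega
  rw [← hfactor]
  ring

theorem splitSum_cons_of_forall_le {a : ℕ} {s : Multiset ℕ} (hs : s ≠ 0)
    (hpos : ∀ x ∈ s, 0 < x) (h : ∀ x ∈ s, x ≤ a) :
    splitSum (a ::ₘ s) = 2 * partP 1 s + (2 * s.sum - 2) * splitSum s := by
  rw [splitSum, antidiagonal_cons, Multiset.map_add, sum_add, map_map, map_map, ← sum_map_add]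
  simp only [Function.comp_apply, Prod.map_apply', id_eq]
  rw [map_congr rfl fun p hp => splitTerm_cons_add_splitTerm_cons hs hpos h hp, sum_map_add,
    sum_map_add, sum_map_mul_left, sum_map_eq_nsmul_single (0, s),
    sum_map_eq_nsmul_single (s, 0), count_zero_self_antidiagonal, count_self_zero_antidiagonal,
    splitSum]
  · simp only [if_true, one_smul]
    ring
  all_goals
    rintro ⟨X, Y⟩ hne hXY
    rw [mem_antidiagonal] at hXY
    refine if_neg fun h0 => hne ?_
    simp_all

theorem two_mul_partP_of_one_mem {M : Multiset ℕ} (hpos : ∀ x ∈ M, 0 < x) (h1 : 1 ∈ M)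
    (hsum : 2 ≤ M.sum) : 2 * partP 1 M = splitSum M := by
  induction M using Multiset.induction_on_max with
  | zero => simp at h1
  | cons a s hmax ih =>
    rcases eq_or_ne s 0 with rfl | hs
    · simp at h1 hsum
      omega
    have hpos' : ∀ x ∈ s, 0 < x := fun x hx => hpos x (mem_cons_of_mem hx)
    have h1s : 1 ∈ s := by
      rcases mem_cons.mp h1 with rfl | h
      · obtain ⟨x, hx⟩ := exists_mem_of_ne_zero hs
        obtain rfl : x = 1 := le_antisymm (hmax x hx) (hpos' x hx)
        exact hx
      · exact h
    have hs1 := sum_pos_of_ne_zero hs hpos'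
    have hsplit : (2 * s.sum - 2) * splitSum s = (2 * s.sum - 2) * (2 * partP 1 s) := by
      rcases (show s.sum = 1 ∨ 2 ≤ s.sum by omega) with h | h
      · simp [h]
      · rw [ih hpos' h1s h]
    rw [partP_cons_of_forall_le 1 hs hmax, splitSum_cons_of_forall_le hs hpos' hmax, hsplit]
    obtain ⟨t, ht⟩ : ∃ t, s.sum = t + 1 := ⟨s.sum - 1, by omega⟩
    rw [ht, pow_one, show 2 * (t + 1) - 1 = 2 * t + 1 by omega,
      show 2 * (t + 1) - 2 = 2 * t by omega]
    ring

theorem two_mul_partP_map_two_mul {N : Multiset ℕ} (hpos : ∀ x ∈ N, 0 < x) (hN : N ≠ 0) :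
    2 * partP 1 (N.map (2 * ·)) = 2 ^ card N * partP 1 N + splitSum (N.map (2 * ·)) := by
  induction N using Multiset.induction_on_max with
  | zero => contradiction
  | cons a s hmax ih =>
    rcases eq_or_ne s 0 with rfl | hs
    · simp [partP_singleton, splitSum_singleton]
    have hpos' : ∀ x ∈ s, 0 < x := fun x hx => hpos x (mem_cons_of_mem hx)
    have hs2 : s.map (2 * ·) ≠ 0 := by simpa using hs
    have hpos2 : ∀ x ∈ s.map (2 * ·), 0 < x := by simpa using hpos'
    have hmax2 : ∀ x ∈ s.map (2 * ·), x ≤ 2 * a := by simpa using hmax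
    have ih' := ih hpos' hs
    rw [map_cons, partP_cons_of_forall_le 1 hs2 hmax2, splitSum_cons_of_forall_le hs2 hpos2 hmax2,
      partP_cons_of_forall_le 1 hs hmax, pow_one, pow_one, sum_map_mul_left, map_id', card_cons,
      pow_succ]
    have hs1 := sum_pos_of_ne_zero hs hpos'
    obtain ⟨t, ht⟩ : ∃ t, s.sum = t + 1 := ⟨s.sum - 1, by omega⟩
    rw [ht, show 2 * (2 * (t + 1)) - 1 = 4 * t + 3 by omega,
      show 2 * (2 * (t + 1)) - 2 = 4 * t + 2 by omega, show 2 * (t + 1) - 1 = 2 * t + 1 by omega]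
    linear_combination (4 * t + 2) * ih'

theorem sum_toFinset_antidiagonal_div_partZ {M : Multiset ℕ} (hpos : ∀ x ∈ M, 0 < x)
    (f : Multiset ℕ × Multiset ℕ → ℚ) :
    ∑ p ∈ (antidiagonal M).toFinset, f p / (partZ p.1 * partZ p.2) =
      ((antidiagonal M).map f).sum / partZ M := by
  rw [Finset.sum_multiset_map_count, eq_div_iff (by exact_mod_cast (partZ_pos hpos).ne'),
    Finset.sum_mul]
  refine Finset.sum_congr rfl fun p hp => ?_
  have hp : p.1 + p.2 = M := mem_antidiagonal.mp (mem_toFinset.mp hp)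
  have hz₁ : (partZ p.1 : ℚ) ≠ 0 := by
    exact_mod_cast (partZ_pos fun x hx => hpos x (hp ▸ mem_add.mpr (.inl hx))).ne'
  have hz₂ : (partZ p.2 : ℚ) ≠ 0 := by
    exact_mod_cast (partZ_pos fun x hx => hpos x (hp ▸ mem_add.mpr (.inr hx))).ne'
  rw [← partZ_mul_partZ_mul_count_antidiagonal hp, nsmul_eq_mul]
  push_cast
  field_simp

theorem finsum_qfun_mul_qfun {M : Multiset ℕ} (hpos : ∀ x ∈ M, 0 < x) :
    ∑ᶠ (p : Multiset ℕ × Multiset ℕ) (_ : p.1 + p.2 = M ∧ p.1 ≠ 0 ∧ p.2 ≠ 0),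
      qfun p.1 * qfun p.2 = splitSum M / partZ M := by
  rw [finsum_cond_eq_sum_of_cond_iff (t := (antidiagonal M).toFinset.filter
      fun p => p.1 ≠ 0 ∧ p.2 ≠ 0) _ (by simp), Finset.sum_filter, splitSum, Nat.cast_multiset_sum,
    map_map, ← sum_toFinset_antidiagonal_div_partZ hpos]
  refine Finset.sum_congr rfl fun p _ => ?_
  split_ifs <;> simp [splitTerm, qfun, div_mul_div_comm, *]

theorem two_mul_qfun_of_one_mem {M : Multiset ℕ} (hpos : ∀ x ∈ M, 0 < x) (h1 : 1 ∈ M)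
    (hsum : 2 ≤ M.sum) : 2 * qfun M = splitSum M / partZ M := by
  rw [qfun, ← two_mul_partP_of_one_mem hpos h1 hsum]
  push_cast
  ring

theorem two_mul_qfun_map_two_mul {N : Multiset ℕ} (hpos : ∀ x ∈ N, 0 < x) (hN : N ≠ 0) :
    2 * qfun (N.map (2 * ·)) = qfun N + splitSum (N.map (2 * ·)) / partZ (N.map (2 * ·)) := by
  have hz : (partZ N : ℚ) ≠ 0 := by exact_mod_cast (partZ_pos hpos).ne'
  have h : (2 * partP 1 (N.map (2 * ·)) : ℚ) =
      2 ^ card N * partP 1 N + splitSum (N.map (2 * ·)) := by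
    exact_mod_cast two_mul_partP_map_two_mul hpos hN
  rw [qfun, qfun, partZ_map_mul two_ne_zero]
  push_cast
  field_simp
  linear_combination h

theorem map_two_mul_map_div_two {M : Multiset ℕ} (h : ∀ x ∈ M, Even x) :
    (M.map (· / 2)).map (2 * ·) = M := by
  rw [map_map]
  conv_rhs => rw [← map_id M]
  exact map_congr rfl fun x hx => Nat.mul_div_cancel' (even_iff_two_dvd.mp (h x hx))

/-- **Equation (5)**: for a binary partition `λ` of `n ≥ 2`,
`2 q_λ = q_{λ/2} + Σ_{λ¹ ∪ λ² = λ} q_{λ¹} q_{λ²}`, where `q_{λ/2} = 0` if `λ` has a part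
equal to `1` and otherwise `λ/2 = (λ_1/2, λ_2/2, …)`, and the sum runs over all ordered
pairs `(λ¹, λ²)` of nonempty partitions whose multiset union is `λ` (each distinct
ordered pair counted once). -/
theorem q_recurrence (n : ℕ) (hn : 2 ≤ n) (lam : n.Partition)
    (hlam : ∀ p ∈ lam.parts, ∃ i : ℕ, p = 2 ^ i) :
    2 * qfun lam.parts =
      (if (1 : ℕ) ∈ lam.parts then 0 else qfun (lam.parts.map (· / 2))) +
        ∑ᶠ (p : Multiset ℕ × Multiset ℕ)
            (_ : p.1 + p.2 = lam.parts ∧ p.1 ≠ 0 ∧ p.2 ≠ 0),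
          qfun p.1 * qfun p.2 := by
  have hpos : ∀ x ∈ lam.parts, 0 < x := fun x hx => lam.parts_pos hx
  have hsum : 2 ≤ lam.parts.sum := lam.parts_sum.symm ▸ hn
  rw [finsum_qfun_mul_qfun hpos]
  split_ifs with h1
  · rw [zero_add]
    exact two_mul_qfun_of_one_mem hpos h1 hsum
  have heven : ∀ x ∈ lam.parts, Even x := fun x hx => by
    obtain ⟨i, rfl⟩ := hlam x hx
    exact Nat.even_pow.mpr ⟨even_two, fun hi => h1 (by simpa [hi] using hx)⟩
  have hhalf := map_two_mul_map_div_two heven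
  have hpos' : ∀ x ∈ lam.parts.map (· / 2), 0 < x := by
    rw [← hhalf] at hpos
    simpa using hpos
  have hne : lam.parts.map (· / 2) ≠ 0 := by
    rintro h0
    rw [← hhalf, h0] at hsum
    simp at hsum
  simpa only [hhalf] using two_mul_qfun_map_two_mul hpos' hne
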